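/- Let I ∈ ℤ_{≥2}, J ∈ ℤ_{≥1}, b ∈ ((I+J-2)/(I+J-1), 1). Define 𝔇_*(z) = z^{J/I}·((bJ-(J-1))z - ((I+J)b-(I+J-1)))/(z - (Ib-(I-1))). Then for z(θ) = 1/(I+1) + (I/(I+1))e^{iθ} with θ ∈ (-π,π]\{0}, one has |𝔇_*(z(θ))| < 1. In particular |𝔇_*(z(θ))|² ≤ 1 - 2I²J(1-b)((I+J+1)b - (I+J-1))(1-cos θ) / (|1/(I+1) + (I/(I+1))e^{iθ} - (Ib-(I-1))|²(1+I)²). -/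

import Mathlib

/-!
Write `α = bJ - (J-1)`, `β = (I+J)b - (I+J-1)`, `γ = Ib - (I-1)`. On the circle
`z(θ) = (1 + I e^{iθ})/(1+I)` the squared modulus `|z|²` is an affine function of `Re z`, hence so
is `|αz - β|² - |z - γ|²`; it vanishes at `z = 1` because `α - β = 1 - γ`. This gives the identity
`|αz - β|² = |z - γ|² - 2I²J(1-b)((I+J+1)b - (I+J-1))(1 - cos θ)/(1+I)²`, whose last term is positive
for `θ ≠ 0` under the hypothesis on `b`. Since `z(θ)` is a convex combination of `1` and `e^{iθ}`,
`|z^{J/I}| ≤ 1`, and both bounds follow.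
-/

open Real

noncomputable def circleM (a θ : ℝ) : ℂ :=
  1 / (a + 1) + a / (a + 1) * Complex.exp (θ * Complex.I)

theorem circleM_re (a θ : ℝ) : (circleM a θ).re = (1 + a * cos θ) / (a + 1) := by
  simp only [circleM, ← Complex.ofReal_one, ← Complex.ofReal_add, ← Complex.ofReal_div,
    Complex.add_re, Complex.re_ofReal_mul, Complex.exp_ofReal_mul_I_re, Complex.ofReal_re]
  ring

theorem circleM_im (a θ : ℝ) : (circleM a θ).im = a * sin θ / (a + 1) := by
  simp only [circleM, ← Complex.ofReal_one, ← Complex.ofReal_add, ← Complex.ofReal_div,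
    Complex.add_im, Complex.im_ofReal_mul, Complex.exp_ofReal_mul_I_im, Complex.ofReal_im]
  ring

theorem norm_circleM_le_one {a : ℝ} (ha : 0 ≤ a) (θ : ℝ) : ‖circleM a θ‖ ≤ 1 := by
  calc ‖circleM a θ‖
      ≤ ‖((1 / (a + 1) : ℝ) : ℂ)‖ + ‖((a / (a + 1) : ℝ) : ℂ)‖ * ‖Complex.exp (θ * Complex.I)‖ := by
        unfold circleM
        push_cast
        exact (norm_add_le _ _).trans_eq (by rw [norm_mul])
    _ = 1 := by
        rw [Complex.norm_exp_ofReal_mul_I, mul_one, Complex.norm_of_nonneg (by positivity),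
          Complex.norm_of_nonneg (by positivity)]
        field_simp
        ring

theorem sq_norm_mul_circleM_sub {a : ℝ} (ha : a + 1 ≠ 0) (θ j b : ℝ) :
    ‖(((b * j - (j - 1) : ℝ) : ℂ)) * circleM a θ - (((a + j) * b - (a + j - 1) : ℝ) : ℂ)‖ ^ 2 =
      ‖circleM a θ - ((a * b - (a - 1) : ℝ) : ℂ)‖ ^ 2 -
        2 * a ^ 2 * j * (1 - b) * ((a + j + 1) * b - (a + j - 1)) * (1 - cos θ) / (1 + a) ^ 2 := by
  have ha' : 1 + a ≠ 0 := by rwa [add_comm]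
  simp only [Complex.sq_norm, Complex.normSq_apply, Complex.sub_re, Complex.sub_im,
    Complex.re_ofReal_mul, Complex.im_ofReal_mul, Complex.ofReal_re, Complex.ofReal_im,
    circleM_re, circleM_im]
  field_simp
  linear_combination a ^ 2 * (1 + a) ^ 2 * ((b * j - (j - 1)) ^ 2 - 1) * sin_sq_add_cos_sq θ

theorem cos_lt_one_of_mem_Ioc {θ : ℝ} (hθ : θ ∈ Set.Ioc (-π) π) (hθ0 : θ ≠ 0) : cos θ < 1 :=
  (cos_le_one θ).lt_of_ne fun h => hθ0 <|
    (cos_eq_one_iff_of_lt_of_lt (by linarith [hθ.1, pi_pos]) (by linarith [hθ.2, pi_pos])).1 h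

-- `(n - 1) / n ≥ n / (n + 2)` as soon as `n ≥ 2`.
theorem lt_add_two_mul_of_sub_one_div_lt {n b : ℝ} (hn : 2 ≤ n) (hb : (n - 1) / n < b) :
    n < (n + 2) * b := by
  rw [div_lt_iff₀ (by linarith)] at hb
  nlinarith

theorem mul_norm_div_lt_one_of_sq_norm_eq_sub {𝕜 : Type*} [NormedDivisionRing 𝕜] {u v : 𝕜}
    {t ε : ℝ} (ht₀ : 0 ≤ t) (ht₁ : t ≤ 1) (hε : 0 < ε) (huv : ‖u‖ ^ 2 = ‖v‖ ^ 2 - ε) :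
    t * ‖u / v‖ < 1 ∧ (t * ‖u / v‖) ^ 2 ≤ 1 - ε / ‖v‖ ^ 2 := by
  have hv : 0 < ‖v‖ ^ 2 := by nlinarith [sq_nonneg ‖u‖]
  have hsq : (t * ‖u / v‖) ^ 2 ≤ 1 - ε / ‖v‖ ^ 2 :=
    calc (t * ‖u / v‖) ^ 2 = t ^ 2 * (‖u‖ ^ 2 / ‖v‖ ^ 2) := by rw [norm_div]; ring
      _ ≤ 1 * (‖u‖ ^ 2 / ‖v‖ ^ 2) := by gcongr; exact pow_le_one₀ ht₀ ht₁
      _ = 1 - ε / ‖v‖ ^ 2 := by rw [one_mul, huv, sub_div, div_self hv.ne']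
  refine ⟨(pow_lt_one_iff_of_nonneg (by positivity) two_ne_zero).1 (hsq.trans_lt ?_), hsq⟩
  exact sub_lt_self 1 (div_pos hε hv)

/-- **Steepest descent bound for `𝔇_*` on the circle `𝓜`** (first part of Lemma 6.3 /
(SD𝓜) of the paper).  Let `I ≥ 2`, `J ≥ 1`, `b ∈ ((I+J-2)/(I+J-1), 1)` and
`𝔇_*(z) = z^{J/I}((bJ-(J-1))z - ((I+J)b-(I+J-1)))/(z - (Ib-(I-1)))`, the fractional power
taken with `|z^{J/I}| = |z|^{J/I}`.  Then for `z(θ) = 1/(I+1) + (I/(I+1))e^{iθ}`,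
`θ ∈ (-π,π] \ {0}`, one has `|𝔇_*(z(θ))| < 1`, and in fact
`|𝔇_*(z(θ))|² ≤ 1 - 2I²J(1-b)((I+J+1)b-(I+J-1))(1-cos θ)/(|z(θ)-(Ib-(I-1))|²(1+I)²)`. -/
theorem Dstar_circleM_bound (I J : ℕ) (hI : 2 ≤ I) (hJ : 1 ≤ J) (b : ℝ)
    (hb : b ∈ Set.Ioo (((I : ℝ) + J - 2) / ((I : ℝ) + J - 1)) 1)
    (θ : ℝ) (hθ : θ ∈ Set.Ioc (-π) π) (hθ0 : θ ≠ 0) :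
    let z : ℂ := 1 / ((I : ℂ) + 1) + ((I : ℂ) / ((I : ℂ) + 1)) * Complex.exp (θ * Complex.I)
    let D : ℝ := ‖z‖ ^ ((J : ℝ) / I) *
      ‖((((b * J - ((J : ℝ) - 1) : ℝ) : ℂ) * z
            - ((((I : ℝ) + J) * b - ((I : ℝ) + J - 1) : ℝ) : ℂ)) /
          (z - (((I : ℝ) * b - ((I : ℝ) - 1) : ℝ) : ℂ)))‖
    D < 1 ∧
      D ^ 2 ≤ 1 - 2 * (I : ℝ) ^ 2 * J * (1 - b) * (((I : ℝ) + J + 1) * b - ((I : ℝ) + J - 1))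
          * (1 - Real.cos θ) /
          (‖(z - (((I : ℝ) * b - ((I : ℝ) - 1) : ℝ) : ℂ))‖ ^ 2 * (1 + (I : ℝ)) ^ 2) := by
  intro z D
  have hz : circleM I θ = z := by simp [circleM, z]
  have hI' : (2 : ℝ) ≤ I := by exact_mod_cast hI
  have hJ' : (1 : ℝ) ≤ J := by exact_mod_cast hJ
  have hb₀ : (I : ℝ) + J - 1 < ((I : ℝ) + J - 1 + 2) * b :=
    lt_add_two_mul_of_sub_one_div_lt (by linarith)
      (by rw [sub_sub, show (1 : ℝ) + 1 = 2 by norm_num]; exact hb.1)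
  have hε : 0 < 2 * (I : ℝ) ^ 2 * J * (1 - b) * (((I : ℝ) + J + 1) * b - ((I : ℝ) + J - 1))
      * (1 - cos θ) / (1 + (I : ℝ)) ^ 2 := by
    have hcos := cos_lt_one_of_mem_Ioc hθ hθ0
    have hb₁ := hb.2
    refine div_pos (mul_pos (mul_pos (mul_pos (by positivity) ?_) ?_) ?_) (by positivity) <;>
      linarith
  rw [div_mul_eq_div_div_swap]
  refine mul_norm_div_lt_one_of_sq_norm_eq_sub (by positivity) ?_ hε ?_
  · exact rpow_le_one (norm_nonneg z) (hz ▸ norm_circleM_le_one I.cast_nonneg θ) (by positivity)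
  · rw [← hz, sq_norm_mul_circleM_sub (by positivity)]
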